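/- Let T be the triangle with vertices (0,0), (2ε,0), (ε,√3ε), and define c(x₁,x₂) = ε⁻² min over the three vertices v of the squared Euclidean distance ‖(x₁,x₂) - v‖². Then ∫_T c(x₁,x₂) dx₁dx₂ = (5/9)√3 ε². -/
import Mathlib

open intervalIntegral

/-- `c(x₁,x₂) = ε⁻²` times the squared Euclidean distance from `(x₁,x₂)` to the nearest
vertex of the triangle with vertices `(0,0)`, `(2ε,0)`, `(ε,√3ε)`. -/
noncomputable def cfun (ε : ℝ) (p : ℝ × ℝ) : ℝ :=
  ε⁻¹ ^ 2 *
    min (min (p.1 ^ 2 + p.2 ^ 2) ((p.1 - 2 * ε) ^ 2 + p.2 ^ 2))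
      ((p.1 - ε) ^ 2 + (p.2 - Real.sqrt 3 * ε) ^ 2)

private lemma sqrt3_sq : Real.sqrt 3 ^ 2 = 3 := Real.sq_sqrt (by norm_num)
private lemma sqrt3_pos : 0 < Real.sqrt 3 := Real.sqrt_pos.2 (by norm_num)

private lemma cfun_cont (ε : ℝ) : Continuous (cfun ε) := by
  unfold cfun; fun_prop

/-- integral of a shifted square plus constant -/
private lemma integ1 (a b C D : ℝ) :
    ∫ y in a..b, (C + (y - D) ^ 2) = C * (b - a) + ((b - D) ^ 3 - (a - D) ^ 3) / 3 := by
  have h := intervalIntegral.integral_comp_sub_right (a := a) (b := b)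
    (fun t => C + t ^ 2) D
  rw [h, intervalIntegral.integral_add intervalIntegrable_const
        ((continuous_pow 2).intervalIntegrable _ _),
      intervalIntegral.integral_const, integral_pow]
  push_cast
  simp only [smul_eq_mul]
  ring

/-- integral of a cubic polynomial -/
private lemma integ_poly (a b c0 c1 c2 c3 : ℝ) :
    ∫ x in a..b, (c3 * x ^ 3 + c2 * x ^ 2 + c1 * x + c0)
      = c3 * (b ^ 4 - a ^ 4) / 4 + c2 * (b ^ 3 - a ^ 3) / 3
        + c1 * (b ^ 2 - a ^ 2) / 2 + c0 * (b - a) := by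
  have i3 : IntervalIntegrable (fun x : ℝ => c3 * x ^ 3) MeasureTheory.volume a b := by
    apply Continuous.intervalIntegrable; fun_prop
  have i2 : IntervalIntegrable (fun x : ℝ => c2 * x ^ 2) MeasureTheory.volume a b := by
    apply Continuous.intervalIntegrable; fun_prop
  have i1 : IntervalIntegrable (fun x : ℝ => c1 * x) MeasureTheory.volume a b := by
    apply Continuous.intervalIntegrable; fun_prop
  have i0 : IntervalIntegrable (fun _ : ℝ => c0) MeasureTheory.volume a b :=
    intervalIntegrable_const
  rw [intervalIntegral.integral_add (by exact (i3.add i2).add i1) i0,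
      intervalIntegral.integral_add (i3.add i2) i1,
      intervalIntegral.integral_add i3 i2,
      intervalIntegral.integral_const_mul, intervalIntegral.integral_const_mul,
      intervalIntegral.integral_const_mul, integral_pow, integral_pow,
      integral_id, intervalIntegral.integral_const]
  simp only [smul_eq_mul]
  push_cast
  ring

/-- on the Voronoi region of the origin -/
private lemma cfun_eq_v0 {ε x y : ℝ} (hε : 0 < ε) (hx : x ≤ ε)
    (h1 : x + Real.sqrt 3 * y ≤ 2 * ε) :
    cfun ε (x, y) = ε⁻¹ ^ 2 * (x ^ 2 + (y - 0) ^ 2) := by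
  have hs := sqrt3_sq
  unfold cfun
  have h02 : x ^ 2 + y ^ 2 ≤ (x - 2 * ε) ^ 2 + y ^ 2 := by nlinarith
  have h01 : x ^ 2 + y ^ 2 ≤ (x - ε) ^ 2 + (y - Real.sqrt 3 * ε) ^ 2 := by nlinarith
  rw [min_eq_left h02, min_eq_left h01]
  ring

/-- on the Voronoi region of the top vertex -/
private lemma cfun_eq_v1 {ε x y : ℝ} (hε : 0 < ε) (hx : x ≤ ε)
    (h1 : 2 * ε ≤ x + Real.sqrt 3 * y) :
    cfun ε (x, y) = ε⁻¹ ^ 2 * ((x - ε) ^ 2 + (y - Real.sqrt 3 * ε) ^ 2) := by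
  have hs := sqrt3_sq
  have h3 : Real.sqrt 3 ^ 2 * ε ^ 2 = 3 * ε ^ 2 := by rw [hs]
  unfold cfun
  have h10 : (x - ε) ^ 2 + (y - Real.sqrt 3 * ε) ^ 2 ≤ x ^ 2 + y ^ 2 := by
    nlinarith [h3, mul_nonneg hε.le (by linarith : (0:ℝ) ≤ x + Real.sqrt 3 * y - 2 * ε)]
  have h12 : (x - ε) ^ 2 + (y - Real.sqrt 3 * ε) ^ 2 ≤ (x - 2 * ε) ^ 2 + y ^ 2 := by
    nlinarith [h3, mul_nonneg hε.le (by linarith : (0:ℝ) ≤ Real.sqrt 3 * y - x)]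
  rw [min_eq_right (le_min h10 h12)]

/-- inner integral for `x ∈ [0, ε/2]` -/
private lemma inner1 {ε x : ℝ} (hε : 0 < ε) (hx0 : 0 ≤ x) (hx : x ≤ ε / 2) :
    ∫ y in (0:ℝ)..(Real.sqrt 3 * x), cfun ε (x, y)
      = ε⁻¹ ^ 2 * (2 * Real.sqrt 3) * x ^ 3 + 0 * x ^ 2 + 0 * x + 0 := by
  have hs := sqrt3_sq
  have hsp := sqrt3_pos
  have hb : (0:ℝ) ≤ Real.sqrt 3 * x := by positivity
  rw [intervalIntegral.integral_congr
      (g := fun y => ε⁻¹ ^ 2 * (x ^ 2 + (y - 0) ^ 2)) ?_]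
  · rw [intervalIntegral.integral_const_mul, integ1]
    linear_combination (ε⁻¹ ^ 2 * Real.sqrt 3 * x ^ 3 / 3) * hs
  · intro y hy
    rw [Set.uIcc_of_le hb] at hy
    obtain ⟨hy0, hy1⟩ := hy
    apply cfun_eq_v0 hε (by linarith)
    have : Real.sqrt 3 * y ≤ Real.sqrt 3 * (Real.sqrt 3 * x) :=
      mul_le_mul_of_nonneg_left hy1 hsp.le
    nlinarith

/-- inner integral for `x ∈ [ε/2, ε]` -/
private lemma inner2 {ε x : ℝ} (hε : 0 < ε) (hx0 : ε / 2 ≤ x) (hx : x ≤ ε) :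
    ∫ y in (0:ℝ)..(Real.sqrt 3 * x), cfun ε (x, y)
      = ε⁻¹ ^ 2 * (2 * Real.sqrt 3) * x ^ 3
        + ε⁻¹ ^ 2 * (-(16 / 3) * Real.sqrt 3 * ε) * x ^ 2
        + ε⁻¹ ^ 2 * (16 / 3 * Real.sqrt 3 * ε ^ 2) * x
        + ε⁻¹ ^ 2 * (-(4 / 3) * Real.sqrt 3 * ε ^ 3) := by
  have hs := sqrt3_sq
  have hsp := sqrt3_pos
  set b : ℝ := Real.sqrt 3 * (2 * ε - x) / 3 with hbdef
  have hb0 : 0 ≤ b := by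
    have : 0 ≤ 2 * ε - x := by linarith
    positivity
  have hbx : b ≤ Real.sqrt 3 * x := by
    rw [hbdef]
    nlinarith
  have hsb : Real.sqrt 3 * b = 2 * ε - x := by
    rw [hbdef]; nlinarith
  have hsplit :
      (∫ y in (0:ℝ)..b, cfun ε (x, y))
        + (∫ y in b..(Real.sqrt 3 * x), cfun ε (x, y))
      = ∫ y in (0:ℝ)..(Real.sqrt 3 * x), cfun ε (x, y) := by
    apply intervalIntegral.integral_add_adjacent_intervals <;>
      exact ((cfun_cont ε).comp (by fun_prop)).intervalIntegrable _ _
  rw [← hsplit]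
  have h1 : (∫ y in (0:ℝ)..b, cfun ε (x, y))
      = ∫ y in (0:ℝ)..b, ε⁻¹ ^ 2 * (x ^ 2 + (y - 0) ^ 2) := by
    apply intervalIntegral.integral_congr
    intro y hy
    rw [Set.uIcc_of_le hb0] at hy
    obtain ⟨hy0, hy1⟩ := hy
    apply cfun_eq_v0 hε hx
    have : Real.sqrt 3 * y ≤ Real.sqrt 3 * b := mul_le_mul_of_nonneg_left hy1 hsp.le
    linarith [hsb ▸ this]
  have h2 : (∫ y in b..(Real.sqrt 3 * x), cfun ε (x, y))
      = ∫ y in b..(Real.sqrt 3 * x),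
          ε⁻¹ ^ 2 * ((x - ε) ^ 2 + (y - Real.sqrt 3 * ε) ^ 2) := by
    apply intervalIntegral.integral_congr
    intro y hy
    rw [Set.uIcc_of_le hbx] at hy
    obtain ⟨hy0, hy1⟩ := hy
    apply cfun_eq_v1 hε hx
    have : Real.sqrt 3 * b ≤ Real.sqrt 3 * y := mul_le_mul_of_nonneg_left hy0 hsp.le
    linarith [hsb ▸ this]
  rw [h1, h2, intervalIntegral.integral_const_mul, intervalIntegral.integral_const_mul,
      integ1, integ1]
  rw [hbdef]
  linear_combination (ε⁻¹ ^ 2 * (Real.sqrt 3 *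
    (x ^ 3 / 3 - 8 / 9 * x ^ 2 * ε + 8 / 9 * x * ε ^ 2 - 2 / 9 * ε ^ 3))) * hs

private lemma cfun_symm (ε x y : ℝ) : cfun ε (2 * ε - x, y) = cfun ε (x, y) := by
  unfold cfun
  simp only
  rw [show (2 * ε - x - 2 * ε) ^ 2 + y ^ 2 = x ^ 2 + y ^ 2 by ring,
      show (2 * ε - x) ^ 2 + y ^ 2 = (x - 2 * ε) ^ 2 + y ^ 2 by ring,
      show (2 * ε - x - ε) ^ 2 = (x - ε) ^ 2 by ring,
      min_comm ((x - 2 * ε) ^ 2 + y ^ 2)]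

/-- The integral of `c` over the equilateral triangle `T` with vertices `(0,0)`, `(2ε,0)`,
`(ε,√3ε)` equals `(5/9)√3 ε²`. -/
theorem voronoi_distance_integral (ε : ℝ) (hε : 0 < ε) :
    (∫ x in (0 : ℝ)..ε, ∫ y in (0 : ℝ)..(Real.sqrt 3 * x), cfun ε (x, y))
        + (∫ x in ε..(2 * ε), ∫ y in (0 : ℝ)..(Real.sqrt 3 * (2 * ε - x)), cfun ε (x, y))
      = 5 / 9 * Real.sqrt 3 * ε ^ 2 := by
  have hs := sqrt3_sq
  have hie : ε⁻¹ * ε = 1 := inv_mul_cancel₀ hε.ne'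
  -- symmetry: the right half integral equals the left half integral
  have hR : (∫ x in ε..(2 * ε), ∫ y in (0 : ℝ)..(Real.sqrt 3 * (2 * ε - x)), cfun ε (x, y))
      = ∫ x in (0 : ℝ)..ε, ∫ y in (0 : ℝ)..(Real.sqrt 3 * x), cfun ε (x, y) := by
    have h := intervalIntegral.integral_comp_sub_left (a := (0:ℝ)) (b := ε)
      (fun t => ∫ y in (0:ℝ)..(Real.sqrt 3 * (2 * ε - t)), cfun ε (t, y)) (2 * ε)
    rw [show 2 * ε - ε = ε by ring, show 2 * ε - 0 = 2 * ε by ring] at h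
    rw [← h]
    apply intervalIntegral.integral_congr
    intro x _
    simp only
    rw [show 2 * ε - (2 * ε - x) = x by ring]
    exact intervalIntegral.integral_congr fun y _ => cfun_symm ε x y
  rw [hR]
  -- split the left half at ε/2
  have hcont : Continuous fun x => ∫ y in (0:ℝ)..(Real.sqrt 3 * x), cfun ε (x, y) := by
    apply intervalIntegral.continuous_parametric_intervalIntegral_of_continuous
    · exact (cfun_cont ε).comp (by fun_prop)
    · fun_prop
  have hsplit :
      (∫ x in (0:ℝ)..(ε/2), ∫ y in (0:ℝ)..(Real.sqrt 3 * x), cfun ε (x, y))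
        + (∫ x in (ε/2)..ε, ∫ y in (0:ℝ)..(Real.sqrt 3 * x), cfun ε (x, y))
      = ∫ x in (0:ℝ)..ε, ∫ y in (0:ℝ)..(Real.sqrt 3 * x), cfun ε (x, y) :=
    intervalIntegral.integral_add_adjacent_intervals
      (hcont.intervalIntegrable _ _) (hcont.intervalIntegrable _ _)
  rw [← hsplit]
  have hI1 : (∫ x in (0:ℝ)..(ε/2), ∫ y in (0:ℝ)..(Real.sqrt 3 * x), cfun ε (x, y))
      = ∫ x in (0:ℝ)..(ε/2),
          (ε⁻¹ ^ 2 * (2 * Real.sqrt 3) * x ^ 3 + 0 * x ^ 2 + 0 * x + 0) := by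
    apply intervalIntegral.integral_congr
    intro x hx
    rw [Set.uIcc_of_le (by linarith : (0:ℝ) ≤ ε/2)] at hx
    exact inner1 hε hx.1 hx.2
  have hI2 : (∫ x in (ε/2)..ε, ∫ y in (0:ℝ)..(Real.sqrt 3 * x), cfun ε (x, y))
      = ∫ x in (ε/2)..ε,
          (ε⁻¹ ^ 2 * (2 * Real.sqrt 3) * x ^ 3
            + ε⁻¹ ^ 2 * (-(16 / 3) * Real.sqrt 3 * ε) * x ^ 2
            + ε⁻¹ ^ 2 * (16 / 3 * Real.sqrt 3 * ε ^ 2) * x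
            + ε⁻¹ ^ 2 * (-(4 / 3) * Real.sqrt 3 * ε ^ 3)) := by
    apply intervalIntegral.integral_congr
    intro x hx
    rw [Set.uIcc_of_le (by linarith : ε/2 ≤ ε)] at hx
    exact inner2 hε hx.1 hx.2
  rw [hI1, hI2, integ_poly, integ_poly]
  linear_combination (5 / 9 * Real.sqrt 3 * ε ^ 2
    + 5 / 9 * Real.sqrt 3 * ε ^ 3 * ε⁻¹) * hie
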